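/- arXiv:1502.03250 — 3 statements merged into one kernel-verified Lean document; each statement's English description precedes it below -/
import Mathlib

section
/- (Conditional a posteriori estimate for the ODE scheme, continuation step) Let $e : [t_0, t_1] \to \mathbb{R}$ be continuous with, for all $t \in [t_0,t_1]$, $|e(t)| \leq \exp\left(\sum_{j=2}^p \int_{t_0}^{t} \frac{M_j}{j!} |e(s)|^{j-1}\, ds\right) G \phi$, where $M_j \geq 0$, $G \geq 1$, $\phi > 0$. If $\delta > 1$ satisfies $\exp\left(\sum_{j=2}^p (\delta G \phi)^{j-1} \frac{M_j}{j!}(t_1 - t_0)\right) \leq (1-\alpha)\delta$ for some $\alpha \in (0,1)$, then $\max_{t\in[t_0,t_1]} |e(t)| \leq \delta G \phi$. -/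
theorem stmt_5 (p : ℕ) (hp : 2 ≤ p) (t0 t1 : ℝ) (ht : t0 < t1)
    (e : ℝ → ℝ) (he : ContinuousOn e (Set.Icc t0 t1))
    (M : ℕ → ℝ) (hM : ∀ j ∈ Finset.Icc 2 p, 0 ≤ M j)
    (G φ : ℝ) (hG : 1 ≤ G) (hφ : 0 < φ)
    (hbound : ∀ t ∈ Set.Icc t0 t1, |e t| ≤
      Real.exp (∑ j ∈ Finset.Icc 2 p,
        ∫ s in t0..t, M j / (Nat.factorial j : ℝ) * |e s| ^ (j - 1)) * G * φ)
    (δ α : ℝ) (hδ : 1 < δ) (hα : α ∈ Set.Ioo (0:ℝ) 1)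
    (hcond : Real.exp (∑ j ∈ Finset.Icc 2 p,
        (δ * G * φ) ^ (j - 1) * (M j / (Nat.factorial j : ℝ)) * (t1 - t0)) ≤ (1 - α) * δ) :
    ∀ t ∈ Set.Icc t0 t1, |e t| ≤ δ * G * φ := by
  obtain ⟨hα0, hα1⟩ := hα
  set D : ℝ := δ * G * φ with hD
  set K : ℝ := (1 - α) * δ * (G * φ) with hK
  have hGφ : 0 < G * φ := by positivity
  have hDpos : 0 < D := by rw [hD]; positivity
  -- the sum in hcond is nonneg, so (1-α)*δ ≥ 1
  have hsum0 : (0:ℝ) ≤ ∑ j ∈ Finset.Icc 2 p,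
      D ^ (j - 1) * (M j / (Nat.factorial j : ℝ)) * (t1 - t0) := by
    apply Finset.sum_nonneg
    intro j hj
    have := hM j hj
    have : 0 ≤ M j / (Nat.factorial j : ℝ) := by positivity
    have h1 : (0:ℝ) ≤ D ^ (j - 1) := by positivity
    have h2 : (0:ℝ) ≤ t1 - t0 := by linarith
    exact mul_nonneg (mul_nonneg h1 this) h2
  have h1le : (1:ℝ) ≤ (1 - α) * δ := by
    calc (1:ℝ) = Real.exp 0 := by simp
    _ ≤ Real.exp (∑ j ∈ Finset.Icc 2 p,
        D ^ (j - 1) * (M j / (Nat.factorial j : ℝ)) * (t1 - t0)) := Real.exp_le_exp.mpr hsum0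
    _ ≤ (1 - α) * δ := hcond
  have hKD : K ≤ D := by
    rw [hK, hD]
    have : (1 - α) * δ ≤ δ := by nlinarith
    nlinarith
  have hGφK : G * φ ≤ K := by
    rw [hK]; nlinarith
  -- key lemma
  have key : ∀ t ∈ Set.Icc t0 t1, (∀ s ∈ Set.Icc t0 t, |e s| ≤ D) → |e t| ≤ K := by
    intro t htm hbd
    have ht0t : t0 ≤ t := htm.1
    have hsub : Set.Icc t0 t ⊆ Set.Icc t0 t1 := Set.Icc_subset_Icc le_rfl htm.2
    have hintle : ∀ j ∈ Finset.Icc 2 p,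
        (∫ s in t0..t, M j / (Nat.factorial j : ℝ) * |e s| ^ (j - 1))
          ≤ D ^ (j - 1) * (M j / (Nat.factorial j : ℝ)) * (t1 - t0) := by
      intro j hj
      have hMj : 0 ≤ M j / (Nat.factorial j : ℝ) := by
        have := hM j hj; positivity
      have hcont : ContinuousOn (fun s => M j / (Nat.factorial j : ℝ) * |e s| ^ (j - 1))
          (Set.uIcc t0 t) := by
        rw [Set.uIcc_of_le ht0t]
        exact (continuousOn_const.mul (((he.mono hsub).abs).pow _))
      have hint : IntervalIntegrable
          (fun s => M j / (Nat.factorial j : ℝ) * |e s| ^ (j - 1)) MeasureTheory.volume t0 t :=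
        hcont.intervalIntegrable
      have hmono : (∫ s in t0..t, M j / (Nat.factorial j : ℝ) * |e s| ^ (j - 1))
          ≤ ∫ _ in t0..t, M j / (Nat.factorial j : ℝ) * D ^ (j - 1) := by
        apply intervalIntegral.integral_mono_on ht0t hint intervalIntegrable_const
        intro s hs
        have h1 : |e s| ≤ D := hbd s hs
        have h2 : |e s| ^ (j - 1) ≤ D ^ (j - 1) :=
          pow_le_pow_left₀ (abs_nonneg _) h1 _
        nlinarith
      calc (∫ s in t0..t, M j / (Nat.factorial j : ℝ) * |e s| ^ (j - 1))
          ≤ ∫ _ in t0..t, M j / (Nat.factorial j : ℝ) * D ^ (j - 1) := hmono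
        _ = (t - t0) * (M j / (Nat.factorial j : ℝ) * D ^ (j - 1)) := by
            rw [intervalIntegral.integral_const]; simp [smul_eq_mul]
        _ ≤ (t1 - t0) * (M j / (Nat.factorial j : ℝ) * D ^ (j - 1)) := by
            have hDj : (0:ℝ) ≤ D ^ (j - 1) := by positivity
            have htt1 : t - t0 ≤ t1 - t0 := by linarith [htm.2]
            exact mul_le_mul_of_nonneg_right htt1 (mul_nonneg hMj hDj)
        _ = D ^ (j - 1) * (M j / (Nat.factorial j : ℝ)) * (t1 - t0) := by ring
    have hsumle : (∑ j ∈ Finset.Icc 2 p,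
        ∫ s in t0..t, M j / (Nat.factorial j : ℝ) * |e s| ^ (j - 1))
        ≤ ∑ j ∈ Finset.Icc 2 p,
          D ^ (j - 1) * (M j / (Nat.factorial j : ℝ)) * (t1 - t0) :=
      Finset.sum_le_sum hintle
    calc |e t| ≤ Real.exp (∑ j ∈ Finset.Icc 2 p,
          ∫ s in t0..t, M j / (Nat.factorial j : ℝ) * |e s| ^ (j - 1)) * G * φ :=
        hbound t htm
      _ ≤ Real.exp (∑ j ∈ Finset.Icc 2 p,
          D ^ (j - 1) * (M j / (Nat.factorial j : ℝ)) * (t1 - t0)) * G * φ := by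
          have := Real.exp_le_exp.mpr hsumle
          nlinarith
      _ ≤ (1 - α) * δ * (G * φ) := by nlinarith
  -- initial point
  have het0 : |e t0| ≤ G * φ := by
    have := hbound t0 ⟨le_rfl, ht.le⟩
    simpa using this
  set A : Set ℝ := {t | t ∈ Set.Icc t0 t1 ∧ ∀ s ∈ Set.Icc t0 t, |e s| ≤ K} with hA
  have ht0A : t0 ∈ A := by
    refine ⟨⟨le_rfl, ht.le⟩, ?_⟩
    intro s hs
    have : s = t0 := le_antisymm hs.2 hs.1
    rw [this]; exact het0.trans hGφK
  have hAne : A.Nonempty := ⟨t0, ht0A⟩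
  have hAbdd : BddAbove A := ⟨t1, fun x hx => hx.1.2⟩
  set c : ℝ := sSup A with hc
  have ht0c : t0 ≤ c := le_csSup hAbdd ht0A
  have hct1 : c ≤ t1 := csSup_le hAne (fun x hx => hx.1.2)
  have hcm : c ∈ Set.Icc t0 t1 := ⟨ht0c, hct1⟩
  -- bound on [t0, c)
  have hIco : ∀ s ∈ Set.Ico t0 c, |e s| ≤ K := by
    intro s hs
    obtain ⟨a, haA, hsa⟩ := exists_lt_of_lt_csSup hAne hs.2
    exact haA.2 s ⟨hs.1, hsa.le⟩
  -- bound at c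
  have hecK : |e c| ≤ K := by
    rcases eq_or_lt_of_le ht0c with h | h
    · rw [← h]; exact het0.trans hGφK
    · have hne : (Filter.NeBot (nhdsWithin c (Set.Ico t0 c))) := right_nhdsWithin_Ico_neBot h
      have htend : Filter.Tendsto (fun s => |e s|) (nhdsWithin c (Set.Ico t0 c)) (nhds |e c|) := by
        have : ContinuousWithinAt e (Set.Ico t0 c) c :=
          (he c hcm).mono (Set.Ico_subset_Icc_self.trans (Set.Icc_subset_Icc le_rfl hct1))
        exact (continuous_abs.continuousAt.comp_continuousWithinAt this)
      exact le_of_tendsto htend (Filter.eventually_of_mem self_mem_nhdsWithin hIco)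
  have hIccK : ∀ s ∈ Set.Icc t0 c, |e s| ≤ K := by
    intro s hs
    rcases eq_or_lt_of_le hs.2 with h | h
    · rw [h]; exact hecK
    · exact hIco s ⟨hs.1, h⟩
  -- c = t1
  have hct1' : c = t1 := by
    by_contra hne
    have hclt : c < t1 := lt_of_le_of_ne hct1 hne
    have hcw : ContinuousWithinAt e (Set.Icc t0 t1) c := he c hcm
    have hεex : ∃ ε > 0, ∀ x ∈ Set.Icc t0 t1, dist x c < ε → dist (e x) (e c) < α * D := by
      have := Metric.continuousWithinAt_iff.mp hcw (α * D) (by positivity)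
      obtain ⟨ε, hε, hh⟩ := this
      exact ⟨ε, hε, fun x hx hd => hh hx hd⟩
    obtain ⟨ε, hε, hh⟩ := hεex
    set t : ℝ := min t1 (c + ε / 2) with htdef
    have hct : c < t := lt_min hclt (by linarith)
    have htle : t ≤ t1 := min_le_left _ _
    have htm : t ∈ Set.Icc t0 t1 := ⟨ht0c.trans hct.le, htle⟩
    have hDbd : ∀ s ∈ Set.Icc t0 t, |e s| ≤ D := by
      intro s hs
      rcases le_or_gt s c with h | h
      · exact (hIccK s ⟨hs.1, h⟩).trans hKD
      · have hsd : dist s c < ε := by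
          rw [Real.dist_eq, abs_of_pos (by linarith)]
          have : s ≤ c + ε / 2 := hs.2.trans (min_le_right _ _)
          linarith
        have := hh s ⟨hs.1, hs.2.trans htle⟩ hsd
        rw [Real.dist_eq] at this
        have h2 : |e s| ≤ |e c| + α * D := by
          have := abs_sub_abs_le_abs_sub (e s) (e c)
          linarith
        have h3 : K + α * D = D := by rw [hK, hD]; ring
        linarith [hecK]
    have htA : t ∈ A := by
      refine ⟨htm, ?_⟩
      intro s hs
      rcases le_or_gt s c with h | h
      · exact hIccK s ⟨hs.1, h⟩
      · exact key s ⟨hs.1, hs.2.trans htle⟩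
          (fun σ hσ => hDbd σ ⟨hσ.1, hσ.2.trans hs.2⟩)
    have : t ≤ c := le_csSup hAbdd htA
    linarith
  intro t htm
  have := hIccK t (hct1' ▸ htm)
  exact this.trans hKD
end

section
/- (Implicit Euler overestimates) For the implicit Euler scheme applied to $u' = u^p$ with $p \geq 2$, $u_0 > 0$: if $U^k > 0$ satisfies $U^k = U^{k-1} + \tau_k (U^k)^p$ with $U^{k-1} \geq u(t^{k-1})$ and $t^k < T^*$, then $U^k \geq u(t^k)$. -/
set_option maxHeartbeats 1000000

theorem stmt_14 (p : ℕ) (hp : 2 ≤ p) (u0 : ℝ) (hu0 : 0 < u0)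
    (u : ℝ → ℝ)
    (hu : ∀ t, u t = (u0 ^ ((1:ℝ) - p) - ((p:ℝ) - 1) * t) ^ (-(1:ℝ) / ((p:ℝ) - 1)))
    (Tstar : ℝ) (hT : Tstar = u0 ^ ((1:ℝ) - p) / ((p:ℝ) - 1))
    (tkm τ tk : ℝ) (htkm : 0 ≤ tkm) (hτ : 0 < τ) (htk : tk = tkm + τ)
    (htkT : tk < Tstar)
    (Ukm Uk : ℝ) (hUk : 0 < Uk)
    (himp : Uk = Ukm + τ * Uk ^ p)
    (hUkm : u tkm ≤ Ukm) :
    u tk ≤ Uk := by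
  set c : ℝ := (p:ℝ) - 1 with hc_def
  have hp2 : (2:ℝ) ≤ (p:ℝ) := by exact_mod_cast hp
  have hc1 : (1:ℝ) ≤ c := by simp [hc_def]; linarith
  have hc : (0:ℝ) < c := by linarith
  set a : ℝ := u0 ^ ((1:ℝ) - (p:ℝ)) with ha_def
  have ha : 0 < a := Real.rpow_pos_of_pos hu0 _
  set q : ℝ := 1 / c with hq_def
  have hq : 0 < q := by positivity
  -- key inequality: one implicit Euler step stays below exact backward solution
  have key : ∀ x : ℝ, 0 < x → x - τ * x ^ p ≤ (x ^ (-c) + c * τ) ^ (-(1:ℝ)/c) := by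
    intro x hx
    set y : ℝ := x ^ (-c) with hy_def
    have hy : 0 < y := Real.rpow_pos_of_pos hx _
    set A : ℝ := y + c * τ with hA_def
    have hA : 0 < A := by positivity
    have hyA : y < A := by nlinarith
    set r : ℝ := y / A with hr_def
    have hr0 : 0 < r := by positivity
    have hr1 : r < 1 := (div_lt_one hA).mpr hyA
    -- x ^ p = x / y
    have hxp : (x:ℝ) ^ p = x / y := by
      have h1 : y = x * ((x:ℝ) ^ p)⁻¹ := by
        rw [hy_def, show -c = (1:ℝ) + (-(p:ℝ)) by simp [hc_def]; ring,
          Real.rpow_add hx, Real.rpow_one, Real.rpow_neg hx.le, Real.rpow_natCast]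
      have hxp0 : (0:ℝ) < x ^ p := by positivity
      rw [h1]; field_simp
    -- Bernoulli
    have hb : 1 + ((1:ℝ) + q) * (r - 1) ≤ ((1:ℝ) + (r - 1)) ^ ((1:ℝ) + q) := by
      apply one_add_mul_self_le_rpow_one_add (by linarith) (by linarith)
    have hrq : r - q * (1 - r) ≤ r ^ q * r := by
      have h2 : ((1:ℝ) + (r - 1)) ^ ((1:ℝ) + q) = r * r ^ q := by
        rw [show (1:ℝ) + (r - 1) = r by ring, Real.rpow_add hr0, Real.rpow_one]
      nlinarith [h2]
    -- divide by r
    have hstep : 1 - q * (1 - r) / r ≤ r ^ q := by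
      rw [show (1:ℝ) - q * (1 - r) / r = (r - q * (1 - r)) / r by field_simp,
        div_le_iff₀ hr0]
      linarith
    -- A ^ (-1/c) = y^(-q) * r^q
    have hAr : A ^ (-(1:ℝ)/c) = y ^ (-q) * r ^ q := by
      rw [hr_def, Real.div_rpow hy.le hA.le, show -(1:ℝ)/c = -q by rw [hq_def]; ring,
        Real.rpow_neg hy.le, Real.rpow_neg hA.le]
      have h1 := (Real.rpow_pos_of_pos hy q).ne'
      have h2 := (Real.rpow_pos_of_pos hA q).ne'
      field_simp
    -- x = y ^ (-q)
    have hxq : x = y ^ (-q) := by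
      rw [hy_def, ← Real.rpow_mul hx.le]
      rw [show -c * -q = (1:ℝ) by rw [hq_def]; field_simp]
      rw [Real.rpow_one]
    -- τ / y = q * (1 - r) / r
    have hτy : τ / y = q * (1 - r) / r := by
      rw [hq_def, hr_def]
      have hAy : A - y = c * τ := by rw [hA_def]; ring
      field_simp
      linear_combination (A * y) * hAy
    calc x - τ * x ^ p = x * (1 - τ / y) := by rw [hxp]; field_simp
      _ ≤ x * (r ^ q) := by
          apply mul_le_mul_of_nonneg_left _ hx.le
          rw [hτy]; exact hstep
      _ = A ^ (-(1:ℝ)/c) := by rw [hAr, hxq]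
  -- strict monotonicity of the backward map
  have Smono : ∀ x z : ℝ, 0 < x → x < z →
      (x ^ (-c) + c * τ) ^ (-(1:ℝ)/c) < (z ^ (-c) + c * τ) ^ (-(1:ℝ)/c) := by
    intro x z hx hxz
    have h1 : z ^ (-c) < x ^ (-c) := Real.rpow_lt_rpow_of_neg hx hxz (by linarith)
    have h2 : (0:ℝ) < z ^ (-c) + c * τ := by
      have := Real.rpow_pos_of_pos (hx.trans hxz) (-c); positivity
    exact Real.rpow_lt_rpow_of_neg h2 (by linarith) (by
      rw [neg_div]; exact neg_neg_iff_pos.mpr (by positivity))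
  -- positivity of B = a - c * tk
  have hB : 0 < a - c * tk := by
    rw [hT] at htkT
    have := (lt_div_iff₀ hc).mp htkT
    nlinarith
  have hutk : u tk = (a - c * tk) ^ (-(1:ℝ)/c) := by rw [hu tk]
  have hutk_pos : 0 < u tk := by rw [hutk]; exact Real.rpow_pos_of_pos hB _
  -- u tkm = S (u tk)
  have hback : u tkm = ((u tk) ^ (-c) + c * τ) ^ (-(1:ℝ)/c) := by
    have h1 : (u tk) ^ (-c) = a - c * tk := by
      rw [hutk, ← Real.rpow_mul hB.le,
        show -(1:ℝ)/c * -c = (1:ℝ) by field_simp, Real.rpow_one]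
    rw [h1, hu tkm, show a - c * tk + c * τ = a - c * tkm by rw [htk]; ring]
  -- conclude
  by_contra hlt
  push_neg at hlt
  have h1 : ((u tk) ^ (-c) + c * τ) ^ (-(1:ℝ)/c) ≤ Uk - τ * Uk ^ p := by
    rw [← hback]; linarith
  have h2 := key Uk hUk
  have h3 := Smono Uk (u tk) hUk hlt
  linarith
end

section
/- Suppose positive reals $A_2, \dots, A_p$ (with $p \geq 2$) satisfy $\sum_{j=2}^p (j-1) A_j e^{j-1} \leq 1$. Then the equation $\sum_{j=2}^p A_j x^{j-1} = \log(x)$ has a solution $x \in (1, \infty)$. -/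
theorem stmt_16 (p : ℕ) (hp : 2 ≤ p) (A : ℕ → ℝ)
    (hA : ∀ j ∈ Finset.Icc 2 p, 0 < A j)
    (hcond : ∑ j ∈ Finset.Icc 2 p, ((j:ℝ) - 1) * A j * Real.exp 1 ^ (j - 1) ≤ 1) :
    ∃ x : ℝ, 1 < x ∧ ∑ j ∈ Finset.Icc 2 p, A j * x ^ (j - 1) = Real.log x := by
  set g : ℝ → ℝ := fun x => ∑ j ∈ Finset.Icc 2 p, A j * x ^ (j - 1) - Real.log x with hg
  have he1 : (1:ℝ) < Real.exp 1 := by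
    have := Real.exp_one_gt_d9; linarith
  have hcont : ContinuousOn g (Set.Icc 1 (Real.exp 1)) := by
    apply ContinuousOn.sub
    · exact (continuous_finset_sum _ fun j _ => (continuous_const.mul (continuous_pow _))).continuousOn
    · apply Real.continuousOn_log.mono
      intro x hx
      simp only [Set.mem_Icc] at hx
      simp only [Set.mem_compl_iff, Set.mem_singleton_iff]
      intro h; rw [h] at hx; linarith [hx.1]
  have h2 : 2 ∈ Finset.Icc 2 p := Finset.mem_Icc.mpr ⟨le_refl 2, hp⟩
  have hg1 : 0 < g 1 := by
    simp only [hg, one_pow, mul_one, Real.log_one, sub_zero]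
    exact Finset.sum_pos (fun j hj => hA j hj) ⟨2, h2⟩
  have hge : g (Real.exp 1) ≤ 0 := by
    have hsum : ∑ j ∈ Finset.Icc 2 p, A j * Real.exp 1 ^ (j - 1)
        ≤ ∑ j ∈ Finset.Icc 2 p, ((j:ℝ) - 1) * A j * Real.exp 1 ^ (j - 1) := by
      apply Finset.sum_le_sum
      intro j hj
      have hj2 : 2 ≤ j := (Finset.mem_Icc.mp hj).1
      have h1j : (1:ℝ) ≤ (j:ℝ) - 1 := by
        have : (2:ℝ) ≤ (j:ℝ) := by exact_mod_cast hj2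
        linarith
      have hpos : 0 < A j * Real.exp 1 ^ (j - 1) :=
        mul_pos (hA j hj) (pow_pos (Real.exp_pos 1) _)
      nlinarith
    simp only [hg, Real.log_exp]
    linarith
  have h0 : (0:ℝ) ∈ Set.Icc (g (Real.exp 1)) (g 1) := ⟨hge, le_of_lt hg1⟩
  obtain ⟨x, hx, hx0⟩ := intermediate_value_Icc' (le_of_lt he1) hcont h0
  refine ⟨x, ?_, ?_⟩
  · rcases lt_or_eq_of_le hx.1 with h | h
    · exact h
    · exfalso; rw [← h] at hx0; linarith
  · have := sub_eq_zero.mp hx0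
    exact this
end
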